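/- Let A and B be Banach algebras and let φ : A → B and ψ : B → A be continuous algebra homomorphisms with φ ∘ ψ = id_B. If A is approximately cyclic amenable, then B is approximately cyclic amenable. -/

import Mathlib

open Filter Topology

noncomputable section

universe u v

variable {A : Type u} [NonUnitalNormedRing A] [NormedSpace ℂ A]
  [IsScalarTower ℂ A A] [SMulCommClass ℂ A A]

/-- The left module action of `A` on its dual `A*`: `(a · f) b = f (b * a)`. -/
def lAct (a : A) (f : A →L[ℂ] ℂ) : A →L[ℂ] ℂ :=
  f.comp ((ContinuousLinearMap.mul ℂ A).flip a)

/-- The right module action of `A` on its dual `A*`: `(f · a) b = f (a * b)`. -/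
def rAct (f : A →L[ℂ] ℂ) (a : A) : A →L[ℂ] ℂ :=
  f.comp (ContinuousLinearMap.mul ℂ A a)

/-- A bounded linear `D : A → A*` is a derivation if `D (a * b) = D a · b + a · D b`. -/
def IsDerivation (D : A →L[ℂ] (A →L[ℂ] ℂ)) : Prop :=
  ∀ a b : A, D (a * b) = rAct (D a) b + lAct a (D b)

/-- A derivation `D : A → A*` is cyclic if `⟨D a, b⟩ + ⟨D b, a⟩ = 0` for all `a, b`. -/
def IsCyclicDeriv (D : A →L[ℂ] (A →L[ℂ] ℂ)) : Prop :=
  ∀ a b : A, D a b + D b a = 0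

/-- `D : A → A*` is approximately inner if there is a net `(f i)` in `A*` with
`D a = lim_i (a · f i - f i · a)` in norm, for every `a ∈ A`. -/
def IsApproxInner {A : Type u} [NonUnitalNormedRing A] [NormedSpace ℂ A]
    [IsScalarTower ℂ A A] [SMulCommClass ℂ A A] (D : A →L[ℂ] (A →L[ℂ] ℂ)) : Prop :=
  ∃ (ι : Type u) (l : Filter ι) (f : ι → (A →L[ℂ] ℂ)), l.NeBot ∧
    ∀ a : A, Tendsto (fun i => lAct a (f i) - rAct (f i) a) l (𝓝 (D a))

/-- `D : A → A*` is inner if `D a = a · f - f · a` for some fixed `f ∈ A*`. -/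
def IsInner (D : A →L[ℂ] (A →L[ℂ] ℂ)) : Prop :=
  ∃ f : A →L[ℂ] ℂ, ∀ a : A, D a = lAct a f - rAct f a

/-- A Banach algebra is approximately cyclic amenable if every cyclic bounded
derivation `D : A → A*` is approximately inner. -/
def ApproxCyclicAmenable (A : Type u) [NonUnitalNormedRing A] [NormedSpace ℂ A]
    [IsScalarTower ℂ A A] [SMulCommClass ℂ A A] : Prop :=
  ∀ D : A →L[ℂ] (A →L[ℂ] ℂ), IsDerivation D → IsCyclicDeriv D → IsApproxInner D

/-- A Banach algebra is cyclic amenable if every cyclic bounded derivation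
`D : A → A*` is inner. -/
def CyclicAmenable (A : Type u) [NonUnitalNormedRing A] [NormedSpace ℂ A]
    [IsScalarTower ℂ A A] [SMulCommClass ℂ A A] : Prop :=
  ∀ D : A →L[ℂ] (A →L[ℂ] ℂ), IsDerivation D → IsCyclicDeriv D → IsInner D

end

/-!
Pulling a derivation `D : B → B*` back along the homomorphism `φ` gives a cyclic derivation
`a ↦ D (φ a) ∘ φ` of `A`, which is approximately inner, say by the net `(f i)`. Since `φ ∘ ψ = id`,
pulling that derivation back further along `ψ` recovers `D`, and pullback along the homomorphism
`ψ` carries the approximating inner derivations of `f i` to those of `f i ∘ ψ`.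
-/

section DualPullback

variable {A : Type u} {B : Type v} [NonUnitalNormedRing A] [NormedSpace ℂ A]
  [NonUnitalNormedRing B] [NormedSpace ℂ B]

noncomputable def dualPullback (φ : A →L[ℂ] B) (D : B →L[ℂ] (B →L[ℂ] ℂ)) :
    A →L[ℂ] (A →L[ℂ] ℂ) :=
  ContinuousLinearMap.precomp ℂ φ ∘L D ∘L φ

@[simp]
theorem dualPullback_apply (φ : A →L[ℂ] B) (D : B →L[ℂ] (B →L[ℂ] ℂ)) (a x : A) :
    dualPullback φ D a x = D (φ a) (φ x) := rfl

theorem IsCyclicDeriv.dualPullback {φ : A →L[ℂ] B} {D : B →L[ℂ] (B →L[ℂ] ℂ)}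
    (hD : IsCyclicDeriv D) : IsCyclicDeriv (dualPullback φ D) :=
  fun a b => hD (φ a) (φ b)

theorem dualPullback_dualPullback_of_leftInverse {φ : A →L[ℂ] B} {ψ : B →L[ℂ] A}
    (h : Function.LeftInverse φ ψ) (D : B →L[ℂ] (B →L[ℂ] ℂ)) :
    dualPullback ψ (dualPullback φ D) = D := by
  ext b x
  simp [h b, h x]

variable [IsScalarTower ℂ A A] [SMulCommClass ℂ A A] [IsScalarTower ℂ B B] [SMulCommClass ℂ B B]

theorem lAct_apply (a : A) (f : A →L[ℂ] ℂ) (x : A) : lAct a f x = f (x * a) := rfl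

theorem rAct_apply (f : A →L[ℂ] ℂ) (a x : A) : rAct f a x = f (a * x) := rfl

theorem lAct_comp {φ : A →L[ℂ] B} (hφ : ∀ x y : A, φ (x * y) = φ x * φ y)
    (a : A) (g : B →L[ℂ] ℂ) : (lAct (φ a) g).comp φ = lAct a (g.comp φ) := by
  ext x
  simp [lAct_apply, hφ]

theorem rAct_comp {φ : A →L[ℂ] B} (hφ : ∀ x y : A, φ (x * y) = φ x * φ y)
    (g : B →L[ℂ] ℂ) (a : A) : (rAct g (φ a)).comp φ = rAct (g.comp φ) a := by
  ext x
  simp [rAct_apply, hφ]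

theorem IsDerivation.dualPullback {φ : A →L[ℂ] B} (hφ : ∀ x y : A, φ (x * y) = φ x * φ y)
    {D : B →L[ℂ] (B →L[ℂ] ℂ)} (hD : IsDerivation D) : IsDerivation (dualPullback φ D) := by
  intro a b
  ext x
  simp [hφ, hD (φ a) (φ b), lAct_apply, rAct_apply]

theorem IsApproxInner.dualPullback {ψ : B →L[ℂ] A} (hψ : ∀ x y : B, ψ (x * y) = ψ x * ψ y)
    {D : A →L[ℂ] (A →L[ℂ] ℂ)} (hD : IsApproxInner D) : IsApproxInner (dualPullback ψ D) := by
  obtain ⟨ι, l, f, hl, hf⟩ := hD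
  -- The net `f i ∘ ψ` is re-indexed by `B*` itself, so that its index type lives in `B`'s universe.
  refine ⟨B →L[ℂ] ℂ, l.map fun i => (f i).comp ψ, id, map_neBot, fun b => ?_⟩
  rw [tendsto_map'_iff]
  refine ((ContinuousLinearMap.precomp ℂ ψ).continuous.tendsto _ |>.comp (hf (ψ b))).congr
    fun i => ?_
  simp [lAct_comp hψ, rAct_comp hψ]

end DualPullback

theorem approxCyclicAmenable_of_retract_general
    {A : Type u} {B : Type v} [NonUnitalNormedRing A] [NormedSpace ℂ A]
    [IsScalarTower ℂ A A] [SMulCommClass ℂ A A]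
    [NonUnitalNormedRing B] [NormedSpace ℂ B]
    [IsScalarTower ℂ B B] [SMulCommClass ℂ B B]
    (φ : A →L[ℂ] B) (hφ : ∀ x y : A, φ (x * y) = φ x * φ y)
    (ψ : B →L[ℂ] A) (hψ : ∀ x y : B, ψ (x * y) = ψ x * ψ y)
    (hcomp : ∀ b : B, φ (ψ b) = b)
    (hA : ApproxCyclicAmenable A) : ApproxCyclicAmenable B := by
  intro D hD hC
  rw [← dualPullback_dualPullback_of_leftInverse hcomp D]
  exact (hA _ (hD.dualPullback hφ) hC.dualPullback).dualPullback hψ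

/-- If `φ : A → B` and `ψ : B → A` are continuous algebra homomorphisms
between Banach algebras with `φ ∘ ψ = id`, and `A` is approximately cyclic amenable,
then so is `B`. -/
theorem approxCyclicAmenable_of_retract
    {A : Type u} {B : Type v} [NonUnitalNormedRing A] [NormedSpace ℂ A]
    [IsScalarTower ℂ A A] [SMulCommClass ℂ A A] [CompleteSpace A]
    [NonUnitalNormedRing B] [NormedSpace ℂ B]
    [IsScalarTower ℂ B B] [SMulCommClass ℂ B B] [CompleteSpace B]
    (φ : A →L[ℂ] B) (hφ : ∀ x y : A, φ (x * y) = φ x * φ y)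
    (ψ : B →L[ℂ] A) (hψ : ∀ x y : B, ψ (x * y) = ψ x * ψ y)
    (hcomp : ∀ b : B, φ (ψ b) = b)
    (hA : ApproxCyclicAmenable A) : ApproxCyclicAmenable B :=
  approxCyclicAmenable_of_retract_general φ hφ ψ hψ hcomp hA
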